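/- Let $f, g \in H^{1/2}(\mathbb{T})$. Then $f\, \partial_x g \in H^{-1}(\mathbb{T})$ with $\|f\,\partial_x g\|_{H^{-1}(\mathbb{T})} \le C\, \|f\|_{H^{1/2}(\mathbb{T})}\, \|g\|_{H^{1/2}(\mathbb{T})}$ for an absolute constant $C>0$. -/

import Mathlib

/-!
With `A(ξ) = ⟨ξ⟩^{1/2} |f̂(ξ)|` and `B(η) = ⟨η⟩^{1/2} |ĝ(η)|`, Cauchy–Schwarz in `η` with the
weight `⟨ξ - η⟩` on `f̂` bounds `⟨ξ⟩⁻² |(f ∂ₓ g)^(ξ)|²` by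
`‖A‖₂² · ⟨ξ⟩⁻² ∑_η ⟨ξ - η⟩⁻¹ |η|² |ĝ(η)|²`. Summing over `ξ` and exchanging the sums leaves the
kernel `|η| ∑_ξ ⟨ξ⟩⁻² ⟨ξ - η⟩⁻¹`, which is at most `3 ∑_ξ ⟨ξ⟩⁻²` uniformly in `η` because
`|η| ≤ ⟨ξ⟩ + ⟨ξ - η⟩` and `1 / (⟨ξ⟩ ⟨ξ - η⟩) ≤ ⟨ξ⟩⁻² + ⟨ξ - η⟩⁻²`; the remaining factor
`|η| |ĝ(η)|² ≤ B(η)²` sums to `‖B‖₂²`. All sums are taken in `ℝ≥0∞`, so exchanging them and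
bounding the norm of a series need no summability bookkeeping.
-/

open Complex

/-- Japanese bracket `⟨ξ⟩ = (1 + ξ²)^{1/2}`. -/
noncomputable def jap (ξ : ℤ) : ℝ := Real.sqrt (1 + (ξ : ℝ) ^ 2)

/-- Fourier coefficients of the product `f ∂_x g`, via the convolution
`(f ∂_x g)^(ξ) = (2π)^{-1/2} ∑_{ξ₁+ξ₂=ξ} f̂(ξ₁) (iξ₂) ĝ(ξ₂)`. -/
noncomputable def prodDx (a b : ℤ → ℂ) (ξ : ℤ) : ℂ :=
  (1 / (Real.sqrt (2 * Real.pi) : ℂ)) *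
    ∑' ξ₂ : ℤ, a (ξ - ξ₂) * (Complex.I * (ξ₂ : ℂ)) * b ξ₂

open MeasureTheory
open scoped ENNReal

namespace ENNReal

theorem tsum_sq_le_tsum_mul_tsum_of_sq_le_mul {ι : Type*} {r f g : ι → ℝ≥0∞}
    (h : ∀ i, r i ^ 2 ≤ f i * g i) : (∑' i, r i) ^ 2 ≤ (∑' i, f i) * ∑' i, g i := by
  let _ : MeasurableSpace ι := ⊤
  have hsq : ∀ x : ℝ≥0∞, (x ^ (2⁻¹ : ℝ)) ^ (2 : ℝ) = x := fun x => by
    rw [← rpow_mul]; norm_num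
  have hr : ∀ i, r i ≤ f i ^ (2⁻¹ : ℝ) * g i ^ (2⁻¹ : ℝ) := fun i => by
    rw [← mul_rpow_of_nonneg _ _ (by norm_num), le_rpow_inv_iff (by norm_num)]
    exact_mod_cast h i
  have holder := lintegral_mul_le_Lp_mul_Lq Measure.count Real.HolderConjugate.two_two
    (measurable_from_top (f := fun i => f i ^ (2⁻¹ : ℝ))).aemeasurable
    (measurable_from_top (f := fun i => g i ^ (2⁻¹ : ℝ))).aemeasurable
  simp only [lintegral_count, Pi.mul_apply, hsq] at holder
  calc (∑' i, r i) ^ 2 ≤ ((∑' i, f i) ^ (2⁻¹ : ℝ) * (∑' i, g i) ^ (2⁻¹ : ℝ)) ^ 2 := by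
        gcongr
        exact (ENNReal.tsum_le_tsum hr).trans (by simpa using holder)
    _ = (∑' i, f i) * ∑' i, g i := by
        rw [mul_pow, ← rpow_natCast, ← rpow_natCast (_ ^ _), ← rpow_mul, ← rpow_mul]; norm_num

theorem tsum_mul_conv_sq_le {G : Type*} [AddGroup G] (W p f g : G → ℝ≥0∞)
    (hp₀ : ∀ x, p x ≠ 0) (hp : ∀ x, p x ≠ ∞) :
    ∑' ξ, W ξ * (∑' η, f (ξ - η) * g η) ^ 2 ≤
      (∑' x, p x * f x ^ 2) * ∑' η, (∑' ξ, W ξ / p (ξ - η)) * g η ^ 2 := by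
  have hcs : ∀ ξ, (∑' η, f (ξ - η) * g η) ^ 2 ≤
      (∑' x, p x * f x ^ 2) * ∑' η, g η ^ 2 / p (ξ - η) := fun ξ => by
    rw [← (Equiv.subLeft ξ).tsum_eq (fun x => p x * f x ^ 2)]
    refine tsum_sq_le_tsum_mul_tsum_of_sq_le_mul fun η => le_of_eq ?_
    simp only [Equiv.subLeft_apply]
    rw [mul_pow, mul_comm (p _), mul_assoc, ENNReal.mul_div_cancel (hp₀ _) (hp _)]
  calc ∑' ξ, W ξ * (∑' η, f (ξ - η) * g η) ^ 2
      ≤ ∑' ξ, W ξ * ((∑' x, p x * f x ^ 2) * ∑' η, g η ^ 2 / p (ξ - η)) := by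
        gcongr with ξ; exact hcs ξ
    _ = (∑' x, p x * f x ^ 2) * ∑' ξ, ∑' η, W ξ / p (ξ - η) * g η ^ 2 := by
        rw [← ENNReal.tsum_mul_left]
        refine tsum_congr fun ξ => ?_
        rw [mul_left_comm, ← ENNReal.tsum_mul_left]
        congr 1
        exact tsum_congr fun η => by simp only [div_eq_mul_inv]; ring
    _ = _ := by rw [ENNReal.tsum_comm]; simp only [ENNReal.tsum_mul_right]

end ENNReal

lemma jap_pos (ξ : ℤ) : 0 < jap ξ := Real.sqrt_pos.2 (by positivity)

lemma sq_jap (ξ : ℤ) : jap ξ ^ 2 = 1 + (ξ : ℝ) ^ 2 := Real.sq_sqrt (by positivity)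

lemma abs_le_jap (ξ : ℤ) : |(ξ : ℝ)| ≤ jap ξ := Real.abs_le_sqrt (by linarith)

lemma abs_le_jap_add_jap_sub (ξ η : ℤ) : |(η : ℝ)| ≤ jap ξ + jap (ξ - η) := by
  have h := abs_le_jap (ξ - η)
  push_cast at h
  calc |(η : ℝ)| = |(ξ : ℝ) - (ξ - η)| := by rw [sub_sub_cancel]
    _ ≤ |(ξ : ℝ)| + |(ξ : ℝ) - η| := abs_sub _ _
    _ ≤ _ := add_le_add (abs_le_jap ξ) h

lemma one_add_sq_rpow_neg_one (ξ : ℤ) : (1 + (ξ : ℝ) ^ 2) ^ (-(1 : ℝ)) = (jap ξ ^ 2)⁻¹ := by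
  rw [Real.rpow_neg_one, sq_jap]

lemma inv_sq_mul_div_le {x y t : ℝ} (hx : 0 < x) (hy : 0 < y) (ht : t ≤ x + y) :
    (x ^ 2)⁻¹ * t / y ≤ 2 * (x ^ 2)⁻¹ + (y ^ 2)⁻¹ := by
  rw [div_le_iff₀ hy]
  field_simp
  nlinarith [sq_nonneg (x - y), mul_pos hx hy]

noncomputable def weightedNormSq (w : ℤ → ℝ) (a : ℤ → ℂ) : ℝ≥0∞ :=
  ∑' ξ, ENNReal.ofReal (w ξ) * ‖a ξ‖ₑ ^ 2

lemma ofReal_mul_norm_sq {w : ℝ} (hw : 0 ≤ w) (z : ℂ) :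
    ENNReal.ofReal (w * ‖z‖ ^ 2) = ENNReal.ofReal w * ‖z‖ₑ ^ 2 := by
  rw [ENNReal.ofReal_mul hw, ENNReal.ofReal_pow (norm_nonneg _), ofReal_norm]

lemma weightedNormSq_eq_ofReal {w : ℤ → ℝ} (hw : ∀ ξ, 0 ≤ w ξ) {a : ℤ → ℂ}
    (ha : Summable fun ξ => w ξ * ‖a ξ‖ ^ 2) :
    weightedNormSq w a = ENNReal.ofReal (∑' ξ, w ξ * ‖a ξ‖ ^ 2) := by
  rw [ENNReal.ofReal_tsum_of_nonneg (fun ξ => by have := hw ξ; positivity) ha, weightedNormSq]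
  exact tsum_congr fun ξ => (ofReal_mul_norm_sq (hw ξ) _).symm

lemma toReal_weightedNormSq {w : ℤ → ℝ} (hw : ∀ ξ, 0 ≤ w ξ) (a : ℤ → ℂ) :
    (weightedNormSq w a).toReal = ∑' ξ, w ξ * ‖a ξ‖ ^ 2 := by
  rw [weightedNormSq, ENNReal.tsum_toReal_eq fun ξ => by simp [ENNReal.mul_eq_top]]
  refine tsum_congr fun ξ => ?_
  rw [← ofReal_mul_norm_sq (hw ξ), ENNReal.toReal_ofReal (by have := hw ξ; positivity)]

lemma enorm_prodDx_le (a b : ℤ → ℂ) (ξ : ℤ) :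
    ‖prodDx a b ξ‖ₑ ≤ ∑' η, ‖a (ξ - η)‖ₑ * (‖(η : ℂ)‖ₑ * ‖b η‖ₑ) := by
  have hc : ‖(1 / (Real.sqrt (2 * Real.pi) : ℂ))‖ₑ ≤ 1 := by
    rw [← ofReal_norm, ← ENNReal.ofReal_one]
    refine ENNReal.ofReal_le_ofReal ?_
    rw [norm_div, norm_one, Complex.norm_real, Real.norm_of_nonneg (Real.sqrt_nonneg _),
      div_le_one (by positivity), Real.one_le_sqrt]
    nlinarith [Real.pi_gt_three]
  rw [prodDx, enorm_mul]
  calc _ ≤ 1 * ∑' η, ‖a (ξ - η) * (I * η) * b η‖ₑ := by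
        gcongr; exact enorm_tsum_le_tsum_enorm
    _ = _ := by
        have hI : ‖I‖ₑ = 1 := by rw [← ofReal_norm, Complex.norm_I, ENNReal.ofReal_one]
        simp only [one_mul, enorm_mul, hI, mul_assoc]

lemma tsum_div_ofReal_jap_mul_enorm_sq_le (η : ℤ) :
    (∑' ξ : ℤ, ENNReal.ofReal (jap ξ ^ 2)⁻¹ / ENNReal.ofReal (jap (ξ - η))) * ‖(η : ℂ)‖ₑ ^ 2 ≤
      3 * (∑' ξ : ℤ, ENNReal.ofReal (jap ξ ^ 2)⁻¹) * ENNReal.ofReal (jap η) := by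
  have hη : ‖(η : ℂ)‖ₑ ≤ ENNReal.ofReal (jap η) := by
    rw [← ofReal_norm, Complex.norm_intCast]; exact ENNReal.ofReal_le_ofReal (abs_le_jap η)
  have hpt : ∀ ξ, ENNReal.ofReal (jap ξ ^ 2)⁻¹ / ENNReal.ofReal (jap (ξ - η)) * ‖(η : ℂ)‖ₑ ≤
      2 * ENNReal.ofReal (jap ξ ^ 2)⁻¹ + ENNReal.ofReal (jap (ξ - η) ^ 2)⁻¹ := fun ξ => by
    rw [← ofReal_norm, Complex.norm_intCast, ← ENNReal.ofReal_div_of_pos (jap_pos _),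
      ← ENNReal.ofReal_mul (div_nonneg (by positivity) (jap_pos _).le),
      ← ENNReal.ofReal_ofNat 2, ← ENNReal.ofReal_mul (by norm_num),
      ← ENNReal.ofReal_add (by positivity) (by positivity), div_mul_eq_mul_div]
    exact ENNReal.ofReal_le_ofReal
      (inv_sq_mul_div_le (jap_pos ξ) (jap_pos _) (abs_le_jap_add_jap_sub ξ η))
  have hshift := (Equiv.subRight η).tsum_eq fun ξ => ENNReal.ofReal (jap ξ ^ 2)⁻¹
  simp only [Equiv.subRight_apply] at hshift
  calc (∑' ξ, ENNReal.ofReal (jap ξ ^ 2)⁻¹ / ENNReal.ofReal (jap (ξ - η))) * ‖(η : ℂ)‖ₑ ^ 2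
      = (∑' ξ, ENNReal.ofReal (jap ξ ^ 2)⁻¹ / ENNReal.ofReal (jap (ξ - η)) * ‖(η : ℂ)‖ₑ)
          * ‖(η : ℂ)‖ₑ := by rw [sq, ← mul_assoc, ENNReal.tsum_mul_right]
    _ ≤ (∑' ξ, (2 * ENNReal.ofReal (jap ξ ^ 2)⁻¹ + ENNReal.ofReal (jap (ξ - η) ^ 2)⁻¹))
          * ENNReal.ofReal (jap η) := by gcongr with ξ; exact hpt ξ
    _ = _ := by rw [ENNReal.tsum_add, ENNReal.tsum_mul_left, hshift]; ring

theorem weightedNormSq_prodDx_le (a b : ℤ → ℂ) :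
    weightedNormSq (fun ξ => (jap ξ ^ 2)⁻¹) (prodDx a b) ≤
      3 * (∑' ξ : ℤ, ENNReal.ofReal (jap ξ ^ 2)⁻¹)
        * weightedNormSq jap a * weightedNormSq jap b := by
  set W : ℤ → ℝ≥0∞ := fun ξ => ENNReal.ofReal (jap ξ ^ 2)⁻¹
  set J : ℤ → ℝ≥0∞ := fun ξ => ENNReal.ofReal (jap ξ)
  calc ∑' ξ, W ξ * ‖prodDx a b ξ‖ₑ ^ 2
      ≤ ∑' ξ, W ξ * (∑' η, ‖a (ξ - η)‖ₑ * (‖(η : ℂ)‖ₑ * ‖b η‖ₑ)) ^ 2 := by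
        gcongr with ξ; exact enorm_prodDx_le a b ξ
    _ ≤ weightedNormSq jap a * ∑' η, (∑' ξ, W ξ / J (ξ - η)) * (‖(η : ℂ)‖ₑ * ‖b η‖ₑ) ^ 2 :=
        ENNReal.tsum_mul_conv_sq_le W J _ _
          (fun ξ => ENNReal.ofReal_pos.2 (jap_pos ξ) |>.ne') (fun _ => ENNReal.ofReal_ne_top)
    _ ≤ weightedNormSq jap a * ∑' η, 3 * (∑' ξ, W ξ) * J η * ‖b η‖ₑ ^ 2 := by
        refine mul_le_mul_right (ENNReal.tsum_le_tsum fun η => ?_) _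
        rw [mul_pow, ← mul_assoc]
        exact mul_le_mul_left (tsum_div_ofReal_jap_mul_enorm_sq_le η) _
    _ = _ := by
        rw [weightedNormSq, weightedNormSq]
        simp only [mul_assoc, ENNReal.tsum_mul_left]
        ring

lemma summable_inv_jap_sq : Summable fun ξ : ℤ => (jap ξ ^ 2)⁻¹ := by
  refine (Real.summable_one_div_int_pow.2 one_lt_two).of_norm_bounded_eventually ?_
  filter_upwards [(Set.finite_singleton (0 : ℤ)).compl_mem_cofinite] with ξ (hξ : ξ ≠ 0)
  rw [Real.norm_of_nonneg (by positivity), sq_jap, one_div]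
  exact inv_anti₀ (by positivity) (by linarith)

theorem tsum_inv_jap_sq_mul_norm_prodDx_sq_le {a b : ℤ → ℂ}
    (ha : Summable fun ξ => jap ξ * ‖a ξ‖ ^ 2) (hb : Summable fun ξ => jap ξ * ‖b ξ‖ ^ 2) :
    ∑' ξ, (jap ξ ^ 2)⁻¹ * ‖prodDx a b ξ‖ ^ 2 ≤
      3 * (∑' ξ : ℤ, (jap ξ ^ 2)⁻¹) * (∑' ξ, jap ξ * ‖a ξ‖ ^ 2) * ∑' ξ, jap ξ * ‖b ξ‖ ^ 2 := by
  have hw : ∀ ξ : ℤ, 0 ≤ (jap ξ ^ 2)⁻¹ := fun ξ => by positivity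
  have hjap : ∀ ξ, 0 ≤ jap ξ := fun ξ => (jap_pos ξ).le
  have key := weightedNormSq_prodDx_le a b
  rw [← ENNReal.ofReal_tsum_of_nonneg hw summable_inv_jap_sq, weightedNormSq_eq_ofReal hjap ha,
    weightedNormSq_eq_ofReal hjap hb] at key
  have hsq := ENNReal.toReal_mono (by finiteness) key
  simpa only [toReal_weightedNormSq hw, ENNReal.toReal_mul, ENNReal.toReal_ofNat,
    ENNReal.toReal_ofReal (tsum_nonneg hw),
    ENNReal.toReal_ofReal (tsum_nonneg fun _ => mul_nonneg (hjap _) (sq_nonneg _))] using hsq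

/-- For `f, g ∈ H^{1/2}(𝕋)` (with Fourier coefficients `a, b`), the product
`f ∂_x g` lies in `H^{-1}(𝕋)` with
`‖f ∂_x g‖_{H^{-1}} ≤ C ‖f‖_{H^{1/2}} ‖g‖_{H^{1/2}}`. -/
theorem stmt16 : ∃ C > 0, ∀ a b : ℤ → ℂ,
    Summable (fun ξ : ℤ => jap ξ * ‖a ξ‖ ^ 2) →
    Summable (fun ξ : ℤ => jap ξ * ‖b ξ‖ ^ 2) →
    (∑' ξ : ℤ, (1 + (ξ : ℝ) ^ 2) ^ (-(1:ℝ)) * ‖prodDx a b ξ‖ ^ 2) ^ ((1:ℝ)/2)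
      ≤ C * (∑' ξ : ℤ, jap ξ * ‖a ξ‖ ^ 2) ^ ((1:ℝ)/2)
          * (∑' ξ : ℤ, jap ξ * ‖b ξ‖ ^ 2) ^ ((1:ℝ)/2) := by
  have hS : 0 < ∑' ξ : ℤ, (jap ξ ^ 2)⁻¹ :=
    summable_inv_jap_sq.tsum_pos (fun _ => by positivity) 0 (by have := jap_pos 0; positivity)
  refine ⟨(3 * ∑' ξ : ℤ, (jap ξ ^ 2)⁻¹) ^ ((1 : ℝ) / 2), by positivity, fun a b ha hb => ?_⟩
  have hnorm : ∀ c : ℤ → ℂ, 0 ≤ ∑' ξ : ℤ, jap ξ * ‖c ξ‖ ^ 2 := fun c =>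
    tsum_nonneg fun ξ => mul_nonneg (jap_pos ξ).le (sq_nonneg _)
  simp only [one_add_sq_rpow_neg_one]
  rw [← Real.mul_rpow (by positivity) (hnorm a),
    ← Real.mul_rpow (by have := hnorm a; positivity) (hnorm b)]
  exact Real.rpow_le_rpow (tsum_nonneg fun _ => by positivity)
    (tsum_inv_jap_sq_mul_norm_prodDx_sq_le ha hb) (by norm_num)
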